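/- If a cyclic word w of length l satisfies w* = w^[k] for some even k (i.e. w is cyclic-symmetric), then k ≡ 2 (mod 4), and consequently ε(w,k) = −1. -/
import Mathlib


/-- A cyclic word with letters `ξ_1, …, ξ_l` (extended periodically), `4 ∣ l`, whose
letters carry types in `ℤ/2` (`𝔼` or `𝔽`) with the relation at transition `i`
(between `ξ_i` and `ξ_{i+1}`) flipping the type exactly when `i` is even — relations
alternate, `r_0 = −`, `r_1 = ∼`.  If the word is cyclic-symmetric, i.e. its reverse
(position `i ↦ l + 1 - i`) equals the shift `w^[k]` for an even `k` — in particular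
the types satisfy `typ (l + 1 - i) = typ (i + k)` — then `k ≡ 2 (mod 4)`, and
consequently `ε(w,k) = (-1)^(k/2) = -1`. -/
theorem cyclic_symmetric_shift (X : Type*) (l k : ℕ) (hl : 1 ≤ l) (hl4 : 4 ∣ l)
    (hk : Even k) (hkl : k < l)
    (w : ℕ → X) (typ : ℕ → ZMod 2)
    (hper : ∀ i, w (i + l) = w i)
    (htypw : ∀ i j, w i = w j → typ i = typ j)
    (hflip : ∀ i, 1 ≤ i → typ (i + 1) = typ i + (if Even i then 1 else 0))
    (hsym : ∀ i, 1 ≤ i → i ≤ l → w (l + 1 - i) = w (i + k)) :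
    k % 4 = 2 ∧ (-1 : ℤ) ^ (k / 2) = -1 := by
  -- step of 2 flips the type
  have step2 : ∀ i, 1 ≤ i → typ (i + 2) = typ i + 1 := by
    intro i hi
    have h1 := hflip i hi
    have h2 := hflip (i + 1) (by omega)
    rcases Nat.even_or_odd i with he | ho
    · have hne : ¬ Even (i + 1) := by simp [Nat.even_add_one, he]
      rw [if_pos he] at h1
      rw [if_neg hne] at h2
      have : i + 1 + 1 = i + 2 := by omega
      rw [this] at h2
      rw [h2, h1]; ring
    · have hne : ¬ Even i := Nat.not_even_iff_odd.mpr ho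
      have he1 : Even (i + 1) := Nat.even_add_one.mpr hne
      rw [if_neg hne] at h1
      rw [if_pos he1] at h2
      have : i + 1 + 1 = i + 2 := by omega
      rw [this] at h2
      rw [h2, h1]; ring
  have stepm : ∀ m i, 1 ≤ i → typ (i + 2 * m) = typ i + (m : ZMod 2) := by
    intro m
    induction m with
    | zero => intro i hi; simp
    | succ n ih =>
      intro i hi
      have : i + 2 * (n + 1) = (i + 2 * n) + 2 := by ring
      rw [this, step2 _ (by omega), ih i hi]
      push_cast; ring
  -- symmetry at i = 1 : w l = w (1 + k)
  have hw : w l = w (1 + k) := by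
    have := hsym 1 le_rfl hl
    simpa using this
  have ht : typ l = typ (1 + k) := htypw _ _ hw
  obtain ⟨q, hq⟩ := hl4
  have hq1 : 1 ≤ q := by omega
  have hl2 : l = 2 + 2 * (2 * q - 1) := by omega
  obtain ⟨n, hn⟩ := hk
  have hk2 : 1 + k = 1 + 2 * (k / 2) := by omega
  have t2 : typ 2 = typ 1 := by
    have := hflip 1 le_rfl
    simpa using this
  rw [hl2, hk2, stepm _ 2 (by omega), stepm _ 1 le_rfl, t2] at ht
  have hcancel : ((2 * q - 1 : ℕ) : ZMod 2) = ((k / 2 : ℕ) : ZMod 2) := by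
    exact add_left_cancel ht
  have hodd : ((2 * q - 1 : ℕ) : ZMod 2) = 1 := by
    have : (2 * q - 1 : ℕ) = 2 * (q - 1) + 1 := by omega
    rw [this]; push_cast
    have h2 : (2 : ZMod 2) = 0 := by decide
    rw [h2]; ring
  rw [hodd] at hcancel
  have hk2odd : Odd (k / 2) := by
    rcases Nat.even_or_odd (k / 2) with he | ho
    · obtain ⟨m, hm⟩ := he
      rw [hm] at hcancel
      have : ((m + m : ℕ) : ZMod 2) = 0 := by
        push_cast
        have h2 : (2 : ZMod 2) = 0 := by decide
        rw [← two_mul, h2, zero_mul]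
      rw [this] at hcancel
      exact absurd hcancel.symm (by decide)
    · exact ho
  constructor
  · obtain ⟨m, hm⟩ := hk2odd
    omega
  · exact Odd.neg_one_pow hk2odd
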